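/- arXiv:2603.21602 — 5 statements merged into one kernel-verified Lean document; each statement's English description precedes it below -/
import Mathlib

section
/- There is an absolute constant C > 0 such that for all real numbers R ≥ 1 and 0 ≤ r₁ < r₂ ≤ R, setting Ψ = {(x,t) ∈ ℝ³ × ℝ : r₁ + |t| < |x| < r₂ + |t| and |x| + |t| > R}, one has ‖χ_Ψ W‖_Y ≤ C · (r₂ − r₁)^(1/10) · R^(−3/5). -/
open MeasureTheory Real Set

noncomputable section

/-- The ground state `W(x) = (1/3 + |x|^2)^(-1/2)` on `ℝ³`. -/
def W3 (x : EuclideanSpace ℝ (Fin 3)) : ℝ := (1/3 + ‖x‖^2) ^ (-(1:ℝ)/2)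

/-- The rescaled ground state `W_λ(x) = λ^(-1/2) W(x/λ)`. -/
def Wlam (lam : ℝ) (x : EuclideanSpace ℝ (Fin 3)) : ℝ := lam ^ (-(1:ℝ)/2) * W3 (lam⁻¹ • x)

/-- The Strichartz norm `‖χ_Ψ u‖_Y = (∫ (∫_{(x,t)∈Ψ} |u|^10 dx)^(1/2) dt)^(1/5)`. -/
def Ynorm (Ψ : Set (EuclideanSpace ℝ (Fin 3) × ℝ))
    (u : EuclideanSpace ℝ (Fin 3) → ℝ → ℝ) : ℝ :=
  (∫ t : ℝ, (∫ x in {x | (x, t) ∈ Ψ}, |u x t| ^ 10) ^ ((1:ℝ)/2)) ^ ((1:ℝ)/5)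

/-- The norm `‖χ_Ψ u‖_{L¹L²} = ∫ (∫_{(x,t)∈Ψ} |u|² dx)^(1/2) dt`. -/
def L1L2 (Ψ : Set (EuclideanSpace ℝ (Fin 3) × ℝ))
    (u : EuclideanSpace ℝ (Fin 3) → ℝ → ℝ) : ℝ :=
  ∫ t : ℝ, (∫ x in {x | (x, t) ∈ Ψ}, (u x t) ^ 2) ^ ((1:ℝ)/2)

/-- The channel region `Ω_{r₁,r₂} = {(x,t) : |t| + r₁ < |x| < |t| + r₂}`. -/
def channel (r₁ r₂ : ℝ) : Set (EuclideanSpace ℝ (Fin 3) × ℝ) :=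
  {p | |p.2| + r₁ < ‖p.1‖ ∧ ‖p.1‖ < |p.2| + r₂}

/-- The radial free wave with radiation profile `G` (in the negative time direction):
`v(x,t) = |x|⁻¹ ∫_{t-|x|}^{t+|x|} G(s) ds`. -/
def freeWave (G : ℝ → ℝ) (x : EuclideanSpace ℝ (Fin 3)) (t : ℝ) : ℝ :=
  ‖x‖⁻¹ * ∫ s in (t - ‖x‖)..(t + ‖x‖), G s

/-- `‖G‖_{L²(E)} = (∫_E |G|²)^(1/2)`. -/
def L2on (G : ℝ → ℝ) (E : Set ℝ) : ℝ := (∫ s in E, (G s)^2) ^ ((1:ℝ)/2)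

/-- The set whose supremum is `sup_{0<r<λ} (λ/r) ∫_{-r}^r |G(s)|² ds`. -/
def tauA (G : ℝ → ℝ) (lam : ℝ) : Set ℝ :=
  {A | ∃ r, 0 < r ∧ r < lam ∧ A = (lam / r) * ∫ s in (-r)..r, (G s)^2}

/-- The set whose supremum is `sup_{r>0} r^(-1/2) ∫_{-r}^r |G(s)| ds`. -/
def tauB (G : ℝ → ℝ) : Set ℝ :=
  {B | ∃ r, 0 < r ∧ B = (∫ s in (-r)..r, |G s|) / Real.sqrt r}

/-- `τ = (sup_{0<r<λ} (λ/r)∫_{-r}^r |G|²)^(1/2) + sup_{r>0} r^(-1/2)∫_{-r}^r |G|`. -/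
def tau (G : ℝ → ℝ) (lam : ℝ) : ℝ := Real.sqrt (sSup (tauA G lam)) + sSup (tauB G)

/-! At time `t` the `x`-slice of the region lies in the shell `a < |x| < a + (r₂ - r₁)` with
`a = max (r₁ + |t|) (R - |t|) ≥ max |t| (R/2)`, and `r₂ - r₁ ≤ 2a`. There `W ≤ |x|⁻¹ ≤ a⁻¹`, and the
shell has volume at most `13 (r₂ - r₁) a² |B₁|`, so `∫ |W|^10 dx ≲ (r₂ - r₁) max |t| (R/2) ^ (-8)`.
After the square root, scaling `t = (R/2) s` gives `∫ max |t| (R/2) ^ (-4) dt ≲ R⁻³`, and the fifth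
root yields `(r₂ - r₁)^(1/10) R^(-3/5)`. -/

open Metric Module

local notation "ℝ³" => EuclideanSpace ℝ (Fin 3)

theorem MeasureTheory.Measure.addHaar_real_ball_of_pos {E : Type*} [NormedAddCommGroup E]
    [NormedSpace ℝ E] [MeasurableSpace E] [BorelSpace E] [FiniteDimensional ℝ E] (μ : Measure E)
    [μ.IsAddHaarMeasure] {r : ℝ} (hr : 0 < r) :
    μ.real (ball 0 r) = r ^ finrank ℝ E * μ.real (ball 0 1) := by
  rw [measureReal_def, Measure.addHaar_ball_of_pos μ 0 hr, ENNReal.toReal_mul,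
    ENNReal.toReal_ofReal (by positivity), measureReal_def]

theorem MeasureTheory.Measure.addHaar_real_annulus {E : Type*} [NormedAddCommGroup E]
    [NormedSpace ℝ E] [MeasurableSpace E] [BorelSpace E] [FiniteDimensional ℝ E] (μ : Measure E)
    [μ.IsAddHaarMeasure] {a b : ℝ} (ha : 0 ≤ a) (hab : a < b) :
    μ.real {x | a < ‖x‖ ∧ ‖x‖ < b} = (b ^ finrank ℝ E - a ^ finrank ℝ E) * μ.real (ball 0 1) := by
  have hannulus : {x : E | a < ‖x‖ ∧ ‖x‖ < b} = ball 0 b \ closedBall 0 a := by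
    ext x; simp [and_comm]
  rw [hannulus, measureReal_sdiff (closedBall_subset_ball hab) measurableSet_closedBall
    measure_ball_lt_top.ne, MeasureTheory.Measure.addHaar_real_ball_of_pos μ (ha.trans_lt hab),
    Measure.addHaar_real_closedBall μ 0 ha, sub_mul]

lemma W3_pos (x : ℝ³) : 0 < W3 x :=
  rpow_pos_of_pos (by positivity) _

lemma W3_le_inv_norm {x : ℝ³} (hx : 0 < ‖x‖) : W3 x ≤ ‖x‖⁻¹ := by
  calc W3 x ≤ (‖x‖ ^ 2) ^ (-(1:ℝ)/2) :=
        rpow_le_rpow_of_nonpos (by positivity) (by linarith) (by norm_num)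
    _ = ‖x‖⁻¹ := by
        rw [← rpow_natCast, ← rpow_mul (norm_nonneg x)]
        norm_num [rpow_neg_one]

lemma setIntegral_W3_pow_ten_le_of_subset_annulus {S : Set (ℝ³)} {a δ : ℝ}
    (ha : 0 < a) (hδ : 0 < δ) (hδa : δ ≤ 2 * a) (hS : S ⊆ {x | a < ‖x‖ ∧ ‖x‖ < a + δ}) :
    ∫ x in S, |W3 x| ^ 10 ≤ 13 * volume.real (ball (0 : ℝ³) 1) * δ / a ^ 8 := by
  set κ := volume.real (ball (0 : ℝ³) 1)
  have hS_ball : S ⊆ ball 0 (a + δ) := fun x hx => by simpa using (hS hx).2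
  have hbound : ∀ x ∈ S, ‖|W3 x| ^ 10‖ ≤ (a ^ 10)⁻¹ := fun x hx => by
    have hax : a < ‖x‖ := (hS hx).1
    rw [norm_pow, norm_abs_eq_norm, norm_of_nonneg (W3_pos x).le, ← inv_pow]
    exact pow_le_pow_left₀ (W3_pos x).le
      ((W3_le_inv_norm (ha.trans hax)).trans (inv_anti₀ ha hax.le)) 10
  have hvol : volume.real S ≤ 13 * δ * a ^ 2 * κ := by
    calc volume.real S ≤ volume.real {x : ℝ³ | a < ‖x‖ ∧ ‖x‖ < a + δ} :=
          measureReal_mono hS (measure_ne_top_of_subset (fun x hx => by simpa using hx.2)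
            (measure_ball_lt_top (x := 0) (r := a + δ)).ne)
      _ = ((a + δ) ^ 3 - a ^ 3) * κ := by
          rw [Measure.addHaar_real_annulus volume ha.le (by linarith), finrank_euclideanSpace_fin]
      _ ≤ 13 * δ * a ^ 2 * κ := by
          gcongr
          nlinarith [mul_nonneg (mul_nonneg ha.le hδ.le) (sub_nonneg.2 hδa),
            mul_nonneg (mul_nonneg hδ.le hδ.le) (sub_nonneg.2 hδa)]
  calc ∫ x in S, |W3 x| ^ 10 ≤ ‖∫ x in S, |W3 x| ^ 10‖ := le_abs_self _
    _ ≤ (a ^ 10)⁻¹ * volume.real S :=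
        norm_setIntegral_le_of_norm_le_const
          ((measure_mono hS_ball).trans_lt measure_ball_lt_top) hbound
    _ ≤ (a ^ 10)⁻¹ * (13 * δ * a ^ 2 * κ) := by gcongr
    _ = 13 * κ * δ / a ^ 8 := by field_simp

def channelSlice (R r₁ r₂ t : ℝ) : Set ℝ³ :=
  {x | r₁ + |t| < ‖x‖ ∧ ‖x‖ < r₂ + |t| ∧ R < ‖x‖ + |t|}

lemma setIntegral_W3_pow_ten_slice_le {R r₁ r₂ : ℝ} (t : ℝ) (h₁ : 0 ≤ r₁) (h₁₂ : r₁ < r₂)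
    (h₂R : r₂ ≤ R) :
    ∫ x in channelSlice R r₁ r₂ t, |W3 x| ^ 10
      ≤ 13 * volume.real (ball (0 : ℝ³) 1) * (r₂ - r₁) / max |t| (R / 2) ^ 8 := by
  set a := max (r₁ + |t|) (R - |t|)
  have hr₁a : r₁ + |t| ≤ a := le_max_left _ _
  have hta : |t| ≤ a := by linarith
  have hRa : R / 2 ≤ a := by linarith [le_max_right (r₁ + |t|) (R - |t|)]
  have hm : 0 < max |t| (R / 2) := lt_max_of_lt_right (by linarith)
  have ha : 0 < a := hm.trans_le (max_le hta hRa)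
  have hslice : channelSlice R r₁ r₂ t ⊆ {x | a < ‖x‖ ∧ ‖x‖ < a + (r₂ - r₁)} :=
    fun x ⟨hx₁, hx₂, hx₃⟩ => ⟨max_lt hx₁ (by linarith), by linarith⟩
  calc _ ≤ 13 * volume.real (ball (0 : ℝ³) 1) * (r₂ - r₁) / a ^ 8 :=
        setIntegral_W3_pow_ten_le_of_subset_annulus ha (by linarith) (by linarith) hslice
    _ ≤ _ := by gcongr; exact max_le hta hRa

lemma inv_max_abs_pow_eq (n : ℕ) {c : ℝ} (hc : 0 < c) (t : ℝ) :
    (max |t| c ^ n)⁻¹ = (c ^ n)⁻¹ * (max |c⁻¹ * t| 1 ^ n)⁻¹ := by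
  have hscale : c * max |c⁻¹ * t| 1 = max |t| c := by
    rw [abs_mul, abs_of_pos (inv_pos.2 hc), mul_max_of_nonneg _ _ hc.le, mul_one,
      mul_inv_cancel_left₀ hc.ne']
  rw [← hscale, mul_pow, mul_inv]

lemma integrable_inv_max_abs_one_pow {n : ℕ} (hn : 2 ≤ n) :
    Integrable fun t : ℝ => (max |t| 1 ^ n)⁻¹ := by
  refine (integrable_inv_one_add_sq.const_mul 2).mono' (by fun_prop) (.of_forall fun t => ?_)
  have h1 : 1 ≤ max |t| 1 := le_max_right _ _
  have hsq : 1 + t ^ 2 ≤ 2 * max |t| 1 ^ n := by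
    have : t ^ 2 ≤ max |t| 1 ^ 2 := by
      rw [← sq_abs]; exact pow_le_pow_left₀ (abs_nonneg t) (le_max_left _ _) 2
    linarith [one_le_pow₀ (n := 2) h1, pow_le_pow_right₀ h1 hn]
  rw [norm_inv, norm_pow, norm_of_nonneg (by positivity), ← div_eq_mul_inv,
    inv_le_comm₀ (by positivity) (by positivity), inv_div, div_le_iff₀ two_pos]
  linarith

lemma integrable_inv_max_abs_pow {n : ℕ} (hn : 2 ≤ n) {c : ℝ} (hc : 0 < c) :
    Integrable fun t : ℝ => (max |t| c ^ n)⁻¹ := by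
  simp_rw [inv_max_abs_pow_eq n hc]
  exact ((integrable_inv_max_abs_one_pow hn).comp_mul_left' (inv_ne_zero hc.ne')).const_mul _

lemma integral_inv_max_abs_pow (n : ℕ) {c : ℝ} (hc : 0 < c) :
    ∫ t : ℝ, (max |t| c ^ n)⁻¹ = c / c ^ n * ∫ t : ℝ, (max |t| 1 ^ n)⁻¹ := by
  simp_rw [inv_max_abs_pow_eq n hc]
  rw [integral_const_mul, Measure.integral_comp_mul_left (fun s => (max |s| 1 ^ n)⁻¹), inv_inv,
    abs_of_pos hc, smul_eq_mul, div_eq_inv_mul, mul_assoc]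

lemma integral_sqrt_setIntegral_W3_pow_ten_slice_le {R r₁ r₂ : ℝ} (h₁ : 0 ≤ r₁) (h₁₂ : r₁ < r₂)
    (h₂R : r₂ ≤ R) :
    ∫ t : ℝ, (∫ x in channelSlice R r₁ r₂ t, |W3 x| ^ 10) ^ ((1:ℝ)/2)
      ≤ √(13 * volume.real (ball (0 : ℝ³) 1)) *
          (8 * ∫ s : ℝ, (max |s| 1 ^ 4)⁻¹) * √(r₂ - r₁) / R ^ 3 := by
  set κ := volume.real (ball (0 : ℝ³) 1)
  have hR : 0 < R / 2 := by linarith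
  have hslice (t : ℝ) :
      (∫ x in channelSlice R r₁ r₂ t, |W3 x| ^ 10) ^ ((1:ℝ)/2)
        ≤ √(13 * κ * (r₂ - r₁)) * (max |t| (R / 2) ^ 4)⁻¹ := by
    have hm : 0 < max |t| (R / 2) := lt_max_of_lt_right hR
    rw [← sqrt_eq_rpow]
    calc _ ≤ √(13 * κ * (r₂ - r₁) / max |t| (R / 2) ^ 8) :=
          sqrt_le_sqrt (setIntegral_W3_pow_ten_slice_le t h₁ h₁₂ h₂R)
      _ = _ := by
          rw [sqrt_div' _ (by positivity), show 8 = 4 * 2 by rfl, pow_mul,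
            sqrt_sq (by positivity), div_eq_mul_inv]
  calc _ ≤ ∫ t : ℝ, √(13 * κ * (r₂ - r₁)) * (max |t| (R / 2) ^ 4)⁻¹ :=
        integral_mono_of_nonneg (.of_forall fun t => by positivity)
          ((integrable_inv_max_abs_pow (by norm_num) hR).const_mul _) (.of_forall hslice)
    _ = _ := by
        rw [integral_const_mul, integral_inv_max_abs_pow 4 hR, sqrt_mul' _ (by linarith)]
        field_simp
        ring

theorem stmt0 :
    ∃ C : ℝ, 0 < C ∧ ∀ R r₁ r₂ : ℝ, 1 ≤ R → 0 ≤ r₁ → r₁ < r₂ → r₂ ≤ R →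
      Ynorm {p | r₁ + |p.2| < ‖p.1‖ ∧ ‖p.1‖ < r₂ + |p.2| ∧ R < ‖p.1‖ + |p.2|}
          (fun x _ => W3 x)
        ≤ C * (r₂ - r₁) ^ ((1:ℝ)/10) * R ^ (-(3:ℝ)/5) := by
  set A := √(13 * volume.real (ball (0 : ℝ³) 1)) *
    (8 * ∫ s : ℝ, (max |s| 1 ^ 4)⁻¹)
  have hA : 0 ≤ A := mul_nonneg (sqrt_nonneg _)
    (mul_nonneg (by norm_num) (integral_nonneg fun s => by positivity))
  refine ⟨max 1 (A ^ ((1:ℝ)/5)), one_pos.trans_le (le_max_left _ _), ?_⟩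
  intro R r₁ r₂ hR h₁ h₁₂ h₂R
  have hδ : 0 ≤ r₂ - r₁ := by linarith
  have hR0 : 0 ≤ R := by linarith
  calc Ynorm _ _ ≤ (A * √(r₂ - r₁) / R ^ 3) ^ ((1:ℝ)/5) :=
        rpow_le_rpow (integral_nonneg fun t => by positivity)
          (integral_sqrt_setIntegral_W3_pow_ten_slice_le h₁ h₁₂ h₂R) (by norm_num)
    _ = A ^ ((1:ℝ)/5) * (r₂ - r₁) ^ ((1:ℝ)/10) * R ^ (-(3:ℝ)/5) := by
        rw [div_eq_mul_inv, ← rpow_natCast, ← rpow_neg hR0, sqrt_eq_rpow,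
          mul_rpow (by positivity) (by positivity), mul_rpow hA (by positivity),
          ← rpow_mul hδ, ← rpow_mul hR0]
        norm_num
    _ ≤ _ := by gcongr; exact le_max_right _ _
end
end

section
/- There is an absolute constant C > 0 such that for every λ > 1 and all real numbers 0 ≤ r₁ < r₂ ≤ 1, one has ‖χ_{Ω_{r₁,r₂}} W⁴·W_λ‖_{L¹L²} ≤ C · λ^(−1/2) · (r₂ − r₁)^(1/2) and ‖χ_{Ω_{r₁,r₂}} W³·W_λ²‖_{L¹L²} ≤ C · λ^(−1) · (r₂ − r₁)^(1/2). -/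
open MeasureTheory Real Set

noncomputable section

/-
On the channel `Ω_{r₁,r₂}` at time `t` one has `|x| > |t|`, so `W(x)² ≤ 3/(1+t²)`, while
`W_λ² ≤ 3/λ` everywhere. Both integrands therefore satisfy `|u|² ≤ K B²/(1+t²)³` there, with
`B = λ^(-1/2)` resp. `B = λ⁻¹`. The time slice of the channel is a spherical shell of
thickness `r₂ - r₁ ≤ 1` and radius at most `|t| + 1`, of volume `O((r₂ - r₁)(1+t²))`, so the
`L²` norm on the slice is `O(B (r₂ - r₁)^(1/2) / (1+t²))`, which is integrable in `t`.
-/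

lemma W3_sq (x : EuclideanSpace ℝ (Fin 3)) : W3 x ^ 2 = (1/3 + ‖x‖ ^ 2)⁻¹ := by
  rw [W3, ← Real.rpow_natCast, ← Real.rpow_mul (by positivity)]
  norm_num [Real.rpow_neg_one]

lemma W3_sq_le_of_abs_le_norm {t : ℝ} {x : EuclideanSpace ℝ (Fin 3)} (h : |t| ≤ ‖x‖) :
    W3 x ^ 2 ≤ 3 / (1 + t ^ 2) := by
  have ht : t ^ 2 ≤ ‖x‖ ^ 2 := sq_le_sq' (abs_le.mp h).1 (abs_le.mp h).2
  rw [W3_sq, ← one_div, div_le_div_iff₀ (by positivity) (by positivity)]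
  linarith [sq_nonneg ‖x‖]

lemma W3_sq_le (x : EuclideanSpace ℝ (Fin 3)) : W3 x ^ 2 ≤ 3 := by
  simpa using W3_sq_le_of_abs_le_norm (t := 0) (by simp)

lemma rpow_neg_half_sq {lam : ℝ} (hlam : 0 ≤ lam) : (lam ^ (-(1:ℝ)/2)) ^ 2 = lam⁻¹ := by
  rw [← Real.rpow_natCast, ← Real.rpow_mul hlam]
  norm_num [Real.rpow_neg_one]

lemma Wlam_sq_le {lam : ℝ} (hlam : 0 ≤ lam) (x : EuclideanSpace ℝ (Fin 3)) :
    Wlam lam x ^ 2 ≤ 3 * lam⁻¹ := by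
  rw [Wlam, mul_pow, rpow_neg_half_sq hlam, mul_comm 3]
  gcongr
  exact W3_sq_le _

lemma sq_W3_pow_four_mul_Wlam_le {lam t : ℝ} {x : EuclideanSpace ℝ (Fin 3)} (hlam : 0 ≤ lam)
    (h : |t| ≤ ‖x‖) :
    (W3 x ^ 4 * Wlam lam x) ^ 2 ≤ 243 * (lam ^ (-(1:ℝ)/2)) ^ 2 / (1 + t ^ 2) ^ 3 := by
  calc (W3 x ^ 4 * Wlam lam x) ^ 2 = (W3 x ^ 2) ^ 3 * W3 x ^ 2 * Wlam lam x ^ 2 := by ring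
    _ ≤ (3 / (1 + t ^ 2)) ^ 3 * 3 * (3 * lam⁻¹) := by
      gcongr
      exacts [W3_sq_le_of_abs_le_norm h, W3_sq_le x, Wlam_sq_le hlam x]
    _ = 243 * (lam ^ (-(1:ℝ)/2)) ^ 2 / (1 + t ^ 2) ^ 3 := by
      rw [rpow_neg_half_sq hlam, div_pow]; ring

lemma sq_W3_pow_three_mul_Wlam_sq_le {lam t : ℝ} {x : EuclideanSpace ℝ (Fin 3)} (hlam : 0 ≤ lam)
    (h : |t| ≤ ‖x‖) :
    (W3 x ^ 3 * Wlam lam x ^ 2) ^ 2 ≤ 243 * lam⁻¹ ^ 2 / (1 + t ^ 2) ^ 3 := by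
  calc (W3 x ^ 3 * Wlam lam x ^ 2) ^ 2 = (W3 x ^ 2) ^ 3 * (Wlam lam x ^ 2) ^ 2 := by ring
    _ ≤ (3 / (1 + t ^ 2)) ^ 3 * (3 * lam⁻¹) ^ 2 := by
      gcongr
      exacts [W3_sq_le_of_abs_le_norm h, Wlam_sq_le hlam x]
    _ = 243 * lam⁻¹ ^ 2 / (1 + t ^ 2) ^ 3 := by rw [div_pow]; ring

lemma volume_shell_le {a b : ℝ} (ha : 0 ≤ a) (hab : a ≤ b) :
    volume {x : EuclideanSpace ℝ (Fin 3) | a < ‖x‖ ∧ ‖x‖ < b}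
      ≤ ENNReal.ofReal (4 * π * (b - a) * b ^ 2) := by
  have hsub : {x : EuclideanSpace ℝ (Fin 3) | a < ‖x‖ ∧ ‖x‖ < b}
      ⊆ Metric.ball 0 b \ Metric.ball 0 a := fun x hx =>
    ⟨mem_ball_zero_iff.mpr hx.2, fun hxa => (mem_ball_zero_iff.mp hxa).not_gt hx.1⟩
  have hcube : b ^ 3 * (π * 4 / 3) - a ^ 3 * (π * 4 / 3) ≤ 4 * π * (b - a) * b ^ 2 := by
    have : b ^ 3 - a ^ 3 ≤ 3 * (b - a) * b ^ 2 := by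
      nlinarith [mul_nonneg (sq_nonneg (b - a)) (by linarith : 0 ≤ a + 2 * b)]
    nlinarith [pi_pos]
  calc _ ≤ volume (Metric.ball (0 : EuclideanSpace ℝ (Fin 3)) b \ Metric.ball 0 a) :=
        measure_mono hsub
    _ = volume (Metric.ball (0 : EuclideanSpace ℝ (Fin 3)) b) - volume (Metric.ball 0 a) :=
        measure_sdiff (Metric.ball_subset_ball hab) measurableSet_ball.nullMeasurableSet
          measure_ball_lt_top.ne
    _ = ENNReal.ofReal (b ^ 3 * (π * 4 / 3) - a ^ 3 * (π * 4 / 3)) := by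
        rw [EuclideanSpace.volume_ball_fin_three, EuclideanSpace.volume_ball_fin_three,
          ← ENNReal.ofReal_pow (ha.trans hab), ← ENNReal.ofReal_pow ha,
          ← ENNReal.ofReal_mul (pow_nonneg (ha.trans hab) 3),
          ← ENNReal.ofReal_mul (pow_nonneg ha 3),
          ENNReal.ofReal_sub _ (mul_nonneg (pow_nonneg ha 3) (by positivity))]
    _ ≤ _ := ENNReal.ofReal_le_ofReal hcube

lemma volume_channel_slice_le {r₁ r₂ : ℝ} (h0 : 0 ≤ r₁) (h12 : r₁ ≤ r₂) (h2 : r₂ ≤ 1) (t : ℝ) :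
    volume {x : EuclideanSpace ℝ (Fin 3) | (x, t) ∈ channel r₁ r₂}
      ≤ ENNReal.ofReal (8 * π * (r₂ - r₁) * (1 + t ^ 2)) := by
  refine (volume_shell_le (a := |t| + r₁) (b := |t| + r₂) (by positivity) (by linarith)).trans
    (ENNReal.ofReal_le_ofReal ?_)
  have hr : 0 ≤ r₂ - r₁ := sub_nonneg.mpr h12
  have hb : (|t| + r₂) ^ 2 ≤ 2 * (1 + t ^ 2) := by
    nlinarith [sq_abs t, sq_nonneg (|t| - 1), abs_nonneg t]
  calc 4 * π * (|t| + r₂ - (|t| + r₁)) * (|t| + r₂) ^ 2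
      ≤ 4 * π * (r₂ - r₁) * (2 * (1 + t ^ 2)) := by rw [add_sub_add_left_eq_sub]; gcongr
    _ = 8 * π * (r₂ - r₁) * (1 + t ^ 2) := by ring

lemma integral_sq_channel_slice_le {r₁ r₂ M t : ℝ} {u : EuclideanSpace ℝ (Fin 3) → ℝ}
    (h0 : 0 ≤ r₁) (h12 : r₁ ≤ r₂) (h2 : r₂ ≤ 1) (hM : 0 ≤ M)
    (hu : ∀ x, |t| ≤ ‖x‖ → u x ^ 2 ≤ M) :
    ∫ x in {x | (x, t) ∈ channel r₁ r₂}, u x ^ 2 ≤ M * (8 * π * (r₂ - r₁) * (1 + t ^ 2)) := by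
  have hvol := volume_channel_slice_le h0 h12 h2 t
  have hbound : ∀ x ∈ {x | (x, t) ∈ channel r₁ r₂}, ‖u x ^ 2‖ ≤ M := fun x hx => by
    rw [Real.norm_of_nonneg (sq_nonneg _)]
    exact hu x (by linarith [hx.1])
  calc _ ≤ ‖∫ x in {x | (x, t) ∈ channel r₁ r₂}, u x ^ 2‖ := Real.le_norm_self _
    _ ≤ M * volume.real {x : EuclideanSpace ℝ (Fin 3) | (x, t) ∈ channel r₁ r₂} :=
      norm_setIntegral_le_of_norm_le_const (hvol.trans_lt ENNReal.ofReal_lt_top) hbound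
    _ ≤ M * (8 * π * (r₂ - r₁) * (1 + t ^ 2)) := by
      gcongr
      exact ENNReal.toReal_le_of_le_ofReal (by have := sub_nonneg.mpr h12; positivity) hvol

lemma L1L2_channel_le {r₁ r₂ K B : ℝ} {u : EuclideanSpace ℝ (Fin 3) → ℝ → ℝ}
    (h0 : 0 ≤ r₁) (h12 : r₁ ≤ r₂) (h2 : r₂ ≤ 1) (hK : 0 ≤ K) (hB : 0 ≤ B)
    (hu : ∀ t x, |t| ≤ ‖x‖ → u x t ^ 2 ≤ K * B ^ 2 / (1 + t ^ 2) ^ 3) :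
    L1L2 (channel r₁ r₂) u ≤ π * √(8 * π * K) * B * (r₂ - r₁) ^ ((1:ℝ)/2) := by
  set c := √(8 * π * K) * B * √(r₂ - r₁)
  have hslice : ∀ t : ℝ,
      (∫ x in {x | (x, t) ∈ channel r₁ r₂}, u x t ^ 2) ^ ((1:ℝ)/2) ≤ c * (1 + t ^ 2)⁻¹ := by
    intro t
    rw [← Real.sqrt_eq_rpow, Real.sqrt_le_left (by positivity)]
    calc _ ≤ K * B ^ 2 / (1 + t ^ 2) ^ 3 * (8 * π * (r₂ - r₁) * (1 + t ^ 2)) :=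
          integral_sq_channel_slice_le h0 h12 h2 (by positivity) (hu t)
      _ = (c * (1 + t ^ 2)⁻¹) ^ 2 := by
          rw [mul_pow, mul_pow, mul_pow, Real.sq_sqrt (by positivity),
            Real.sq_sqrt (sub_nonneg.mpr h12)]
          field_simp
  calc L1L2 (channel r₁ r₂) u ≤ ∫ t : ℝ, c * (1 + t ^ 2)⁻¹ :=
        integral_mono_of_nonneg (ae_of_all _ fun t => by positivity)
          (integrable_inv_one_add_sq.const_mul c) (ae_of_all _ hslice)
    _ = π * √(8 * π * K) * B * (r₂ - r₁) ^ ((1:ℝ)/2) := by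
        rw [integral_const_mul, integral_univ_inv_one_add_sq, ← Real.sqrt_eq_rpow]
        ring

theorem stmt3 :
    ∃ C : ℝ, 0 < C ∧ ∀ lam r₁ r₂ : ℝ, 1 < lam → 0 ≤ r₁ → r₁ < r₂ → r₂ ≤ 1 →
      L1L2 (channel r₁ r₂) (fun x _ => (W3 x)^4 * Wlam lam x)
        ≤ C * lam ^ (-(1:ℝ)/2) * (r₂ - r₁) ^ ((1:ℝ)/2) ∧
      L1L2 (channel r₁ r₂) (fun x _ => (W3 x)^3 * (Wlam lam x)^2)
        ≤ C * lam⁻¹ * (r₂ - r₁) ^ ((1:ℝ)/2) := by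
  refine ⟨π * √(8 * π * 243), by positivity, fun lam r₁ r₂ hlam h0 h12 h2 => ?_⟩
  have hlam0 : 0 ≤ lam := by linarith
  exact ⟨L1L2_channel_le h0 h12.le h2 (by norm_num) (by positivity)
      fun _ _ h => sq_W3_pow_four_mul_Wlam_le hlam0 h,
    L1L2_channel_le h0 h12.le h2 (by norm_num) (by positivity)
      fun _ _ h => sq_W3_pow_three_mul_Wlam_sq_le hlam0 h⟩
end
end

section
/- There is an absolute constant C > 0 such that for every λ > 1 and all real numbers 0 ≤ r₁ < r₂ ≤ λ, one has ‖χ_{Ω_{r₁,r₂}} W·W_λ⁴‖_{L¹L²} ≤ C · λ^(−1) · (r₂ − r₁)^(1/2). -/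
open MeasureTheory Real Set

noncomputable section

/-!
On the slice `|t| + r₁ < |x| < |t| + r₂` of the channel one has `|x| > |t|`, hence
`W² ≤ |x|⁻²` and `W_λ⁴ ≤ 9 / (λ² + t²)`. Since `∫ |x|⁻²` over a spherical shell in `ℝ³` is
`4π` times its width, the `L²` norm on the slice is at most `√(4π (r₂ - r₁)) · 9 / (λ² + t²)`,
and integrating in `t` contributes `π / λ`.
-/

open Metric Module

section Annulus

variable {E : Type*} [NormedAddCommGroup E]

lemma radial_weight_mul_indicator_inv {n : ℕ} {a b y : ℝ} (hy : 0 < y) :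
    y ^ n • (Ioo a b).indicator (fun r => (r ^ n)⁻¹) y = (Ioo a b).indicator 1 y := by
  by_cases hab : y ∈ Ioo a b
  · simp [hab, hy.ne']
  · simp [hab]

lemma indicator_annulus_eq_comp_norm {a b : ℝ} (g : ℝ → ℝ) :
    {x : E | ‖x‖ ∈ Ioo a b}.indicator (fun x => g ‖x‖) = fun x => (Ioo a b).indicator g ‖x‖ :=
  funext fun _ => indicator_comp_right _

lemma measurableSet_annulus [MeasurableSpace E] [OpensMeasurableSpace E] (a b : ℝ) :
    MeasurableSet {x : E | ‖x‖ ∈ Ioo a b} :=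
  measurable_norm measurableSet_Ioo

variable [NormedSpace ℝ E] [MeasurableSpace E] [BorelSpace E] [FiniteDimensional ℝ E]
  [Nontrivial E] (μ : Measure E) [μ.IsAddHaarMeasure]

lemma integrableOn_annulus_inv_norm_pow (a b : ℝ) :
    IntegrableOn (fun x : E => (‖x‖ ^ (finrank ℝ E - 1))⁻¹) {x | ‖x‖ ∈ Ioo a b} μ := by
  rw [← integrable_indicator_iff (measurableSet_annulus a b),
    indicator_annulus_eq_comp_norm (fun r => (r ^ (finrank ℝ E - 1))⁻¹),
    integrable_fun_norm_addHaar μ,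
    integrableOn_congr_fun (fun y (hy : y ∈ Ioi 0) => radial_weight_mul_indicator_inv hy)
      measurableSet_Ioi]
  exact ((integrable_indicator_iff measurableSet_Ioo).2
    (integrableOn_const measure_Ioo_lt_top.ne)).integrableOn

lemma integral_annulus_inv_norm_pow {a b : ℝ} (ha : 0 ≤ a) (hab : a ≤ b) :
    ∫ x in {x | ‖x‖ ∈ Ioo a b}, (‖x‖ ^ (finrank ℝ E - 1))⁻¹ ∂μ
      = finrank ℝ E * μ.real (ball 0 1) * (b - a) := by
  rw [← integral_indicator (measurableSet_annulus a b),
    indicator_annulus_eq_comp_norm (fun r => (r ^ (finrank ℝ E - 1))⁻¹),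
    integral_fun_norm_addHaar μ,
    setIntegral_congr_fun measurableSet_Ioi
      (fun y (hy : y ∈ Ioi 0) => radial_weight_mul_indicator_inv hy),
    setIntegral_indicator measurableSet_Ioo,
    inter_eq_self_of_subset_right (Ioo_subset_Ioi_self.trans (Ioi_subset_Ioi ha))]
  simp [Real.volume_real_Ioo_of_le hab, nsmul_eq_mul, mul_assoc]

end Annulus

lemma integrableOn_annulus_inv_norm_sq_fin_three (a b : ℝ) :
    IntegrableOn (fun x : EuclideanSpace ℝ (Fin 3) => (‖x‖ ^ 2)⁻¹) {x | ‖x‖ ∈ Ioo a b} := by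
  simpa using integrableOn_annulus_inv_norm_pow (volume : Measure (EuclideanSpace ℝ (Fin 3))) a b

lemma integral_annulus_inv_norm_sq_fin_three {a b : ℝ} (ha : 0 ≤ a) (hab : a ≤ b) :
    ∫ x in {x : EuclideanSpace ℝ (Fin 3) | ‖x‖ ∈ Ioo a b}, (‖x‖ ^ 2)⁻¹ = 4 * π * (b - a) := by
  have h := integral_annulus_inv_norm_pow (volume : Measure (EuclideanSpace ℝ (Fin 3))) ha hab
  rw [finrank_euclideanSpace_fin, measureReal_def, EuclideanSpace.volume_ball_fin_three] at h
  simp only [Nat.reduceSub, ENNReal.ofReal_one, one_pow, one_mul, Nat.cast_ofNat] at h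
  rw [h, ENNReal.toReal_ofReal (by positivity)]
  ring

lemma integrable_inv_sq_add_sq {c : ℝ} (hc : c ≠ 0) :
    Integrable fun t : ℝ => (c ^ 2 + t ^ 2)⁻¹ := by
  have h := (integrable_inv_one_add_sq.comp_div hc).const_mul (c ^ 2)⁻¹
  refine h.congr (ae_of_all _ fun t => ?_)
  field_simp

lemma integral_univ_inv_sq_add_sq {c : ℝ} (hc : c ≠ 0) :
    ∫ t : ℝ, (c ^ 2 + t ^ 2)⁻¹ = π / |c| := by
  have h : (fun t : ℝ => (c ^ 2 + t ^ 2)⁻¹) = fun t => (c ^ 2)⁻¹ * (1 + (t / c) ^ 2)⁻¹ := by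
    funext t
    field_simp
  rw [h, integral_const_mul, Measure.integral_comp_div (fun s => (1 + s ^ 2)⁻¹),
    integral_univ_inv_one_add_sq, smul_eq_mul, ← sq_abs c]
  field_simp

lemma sq_W3 (x : EuclideanSpace ℝ (Fin 3)) : W3 x ^ 2 = (1 / 3 + ‖x‖ ^ 2)⁻¹ := by
  rw [W3, ← rpow_natCast, ← rpow_mul (by positivity)]
  norm_num [rpow_neg_one]

lemma sq_Wlam {lam : ℝ} (hlam : 0 < lam) (x : EuclideanSpace ℝ (Fin 3)) :
    Wlam lam x ^ 2 = lam / (lam ^ 2 / 3 + ‖x‖ ^ 2) := by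
  have hpow : (lam ^ (-(1:ℝ)/2)) ^ 2 = lam⁻¹ := by
    rw [← rpow_natCast, ← rpow_mul hlam.le]
    norm_num [rpow_neg_one]
  rw [Wlam, mul_pow, hpow, sq_W3, norm_smul, norm_inv, norm_of_nonneg hlam.le]
  field_simp

lemma sq_W3_le_inv_norm_sq {x : EuclideanSpace ℝ (Fin 3)} (hx : x ≠ 0) :
    W3 x ^ 2 ≤ (‖x‖ ^ 2)⁻¹ := by
  rw [sq_W3]
  exact inv_anti₀ (by positivity) (by linarith)

lemma Wlam_pow_four_le {lam t : ℝ} (hlam : 0 < lam) {x : EuclideanSpace ℝ (Fin 3)}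
    (ht : |t| ≤ ‖x‖) : Wlam lam x ^ 4 ≤ 9 * (lam ^ 2 + t ^ 2)⁻¹ := by
  have hts : t ^ 2 ≤ ‖x‖ ^ 2 := sq_le_sq' (neg_le_of_abs_le ht) (le_of_abs_le ht)
  have hden : (lam ^ 2 + t ^ 2) / 3 ≤ lam ^ 2 / 3 + ‖x‖ ^ 2 := by linarith [sq_nonneg t]
  calc Wlam lam x ^ 4 = (lam / (lam ^ 2 / 3 + ‖x‖ ^ 2)) ^ 2 := by rw [← sq_Wlam hlam]; ring
    _ ≤ (lam / ((lam ^ 2 + t ^ 2) / 3)) ^ 2 := by gcongr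
    _ = 9 * (lam ^ 2 / (lam ^ 2 + t ^ 2)) * (lam ^ 2 + t ^ 2)⁻¹ := by field_simp; norm_num
    _ ≤ 9 * 1 * (lam ^ 2 + t ^ 2)⁻¹ := by
        gcongr
        exact div_le_one_of_le₀ (by nlinarith) (by positivity)
    _ = 9 * (lam ^ 2 + t ^ 2)⁻¹ := by ring

lemma sqrt_integral_annulus_sq_W3_mul_Wlam_pow_four_le {lam t a b : ℝ} (hlam : 0 < lam)
    (ht : |t| ≤ a) (hab : a ≤ b) :
    (∫ x in {x : EuclideanSpace ℝ (Fin 3) | ‖x‖ ∈ Ioo a b}, (W3 x * Wlam lam x ^ 4) ^ 2)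
        ^ ((1:ℝ)/2) ≤ √(4 * π * (b - a)) * 9 * (lam ^ 2 + t ^ 2)⁻¹ := by
  have hpointwise : ∀ x ∈ {x : EuclideanSpace ℝ (Fin 3) | ‖x‖ ∈ Ioo a b},
      (W3 x * Wlam lam x ^ 4) ^ 2 ≤ (‖x‖ ^ 2)⁻¹ * (9 * (lam ^ 2 + t ^ 2)⁻¹) ^ 2 := by
    intro x hx
    have htx : |t| < ‖x‖ := ht.trans_lt hx.1
    rw [mul_pow]
    exact mul_le_mul (sq_W3_le_inv_norm_sq (norm_pos_iff.1 ((abs_nonneg t).trans_lt htx)))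
      (pow_le_pow_left₀ (by positivity) (Wlam_pow_four_le hlam htx.le) 2)
      (by positivity) (by positivity)
  have hint : ∫ x in {x : EuclideanSpace ℝ (Fin 3) | ‖x‖ ∈ Ioo a b}, (W3 x * Wlam lam x ^ 4) ^ 2
      ≤ 4 * π * (b - a) * (9 * (lam ^ 2 + t ^ 2)⁻¹) ^ 2 := by
    rw [← integral_annulus_inv_norm_sq_fin_three ((abs_nonneg t).trans ht) hab,
      ← integral_mul_const]
    exact integral_mono_of_nonneg (ae_of_all _ fun x => sq_nonneg _)
      ((integrableOn_annulus_inv_norm_sq_fin_three a b).mul_const _)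
      ((ae_restrict_iff' (measurableSet_annulus a b)).2 (ae_of_all _ hpointwise))
  rw [← sqrt_eq_rpow, mul_assoc, ← sqrt_sq (by positivity : 0 ≤ 9 * (lam ^ 2 + t ^ 2)⁻¹),
    ← sqrt_mul (mul_nonneg (by positivity) (sub_nonneg.2 hab))]
  exact sqrt_le_sqrt hint

lemma channel_slice (r₁ r₂ t : ℝ) :
    {x | (x, t) ∈ channel r₁ r₂} = {x | ‖x‖ ∈ Ioo (|t| + r₁) (|t| + r₂)} := rfl

lemma L1L2_le_integral {Ψ : Set (EuclideanSpace ℝ (Fin 3) × ℝ)}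
    {u : EuclideanSpace ℝ (Fin 3) → ℝ → ℝ} {g : ℝ → ℝ} (hg : Integrable g)
    (h : ∀ t, (∫ x in {x | (x, t) ∈ Ψ}, u x t ^ 2) ^ ((1:ℝ)/2) ≤ g t) :
    L1L2 Ψ u ≤ ∫ t, g t :=
  integral_mono_of_nonneg
    (ae_of_all _ fun _ => rpow_nonneg (integral_nonneg fun _ => sq_nonneg _) _) hg (ae_of_all _ h)

theorem stmt4 :
    ∃ C : ℝ, 0 < C ∧ ∀ lam r₁ r₂ : ℝ, 1 < lam → 0 ≤ r₁ → r₁ < r₂ → r₂ ≤ lam →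
      L1L2 (channel r₁ r₂) (fun x _ => W3 x * (Wlam lam x)^4)
        ≤ C * lam⁻¹ * (r₂ - r₁) ^ ((1:ℝ)/2) := by
  refine ⟨18 * π * √π, by positivity, fun lam r₁ r₂ hlam hr₁ hr _ => ?_⟩
  have hlam0 : 0 < lam := one_pos.trans hlam
  have hslice : ∀ t : ℝ, (∫ x in {x | (x, t) ∈ channel r₁ r₂}, (W3 x * Wlam lam x ^ 4) ^ 2)
      ^ ((1:ℝ)/2) ≤ √(4 * π * (r₂ - r₁)) * 9 * (lam ^ 2 + t ^ 2)⁻¹ := fun t => by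
    rw [channel_slice, ← add_sub_add_left_eq_sub r₂ r₁ |t|]
    exact sqrt_integral_annulus_sq_W3_mul_Wlam_pow_four_le hlam0 (le_add_of_nonneg_right hr₁)
      (by linarith)
  calc L1L2 (channel r₁ r₂) (fun x _ => W3 x * (Wlam lam x)^4)
      ≤ ∫ t, √(4 * π * (r₂ - r₁)) * 9 * (lam ^ 2 + t ^ 2)⁻¹ :=
        L1L2_le_integral ((integrable_inv_sq_add_sq hlam0.ne').const_mul _) hslice
    _ = √(4 * π * (r₂ - r₁)) * 9 * (π / lam) := by
        rw [integral_const_mul, integral_univ_inv_sq_add_sq hlam0.ne', abs_of_pos hlam0]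
    _ = 18 * π * √π * lam⁻¹ * (r₂ - r₁) ^ ((1:ℝ)/2) := by
        rw [← sqrt_eq_rpow, sqrt_mul' _ (by linarith), sqrt_mul (by norm_num),
          show √(4:ℝ) = 2 by rw [show (4:ℝ) = 2 ^ 2 by norm_num, sqrt_sq zero_le_two]]
        field_simp
        ring
end
end

section
/- There is an absolute constant C > 0 such that for every λ ≥ 2 and all real numbers 0 ≤ r₁ < r₂ ≤ λ, one has ‖χ_{Ω_{r₁,r₂}} W⁴·(W_λ − √3·λ^(−1/2))‖_{L¹L²} ≤ C · (r₂ − r₁)^(1/2) · λ^(−5/2) · ln λ. -/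
open MeasureTheory Real Set

noncomputable section

/-! The integrand is radial and time independent, so its `L¹L²` norm over the channel is
`2 ∫₀^∞ (∫_{T+r₁<|x|<T+r₂} f²)^{1/2} dT`, and in polar coordinates the inner integral is at most
`4π (r₂ - r₁) sup_{y ≥ T} y² f(y)²`. With `w(r) = (1/3 + r²)^{-1/2}` one has
`f(y)² = w(y)⁸ λ⁻¹ (w(y/λ) - √3)²`, where `(w(s) - √3)²` is at most `3` and at most `27 s⁴`.
For `y ≥ T` the second bound gives `y f(y) ≲ λ^{-5/2} (1 + T)⁻¹` and the first
`y f(y) ≲ λ^{-1/2} T⁻³`; using the former for `T ≤ λ` and the latter beyond, the `T`-integral is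
`≲ λ^{-5/2} (log (1 + λ) + 1) ≲ λ^{-5/2} log λ`. -/

open Module Metric

section ShellIntegral

variable {E : Type*} [NormedAddCommGroup E] [NormedSpace ℝ E] [Nontrivial E]
  [FiniteDimensional ℝ E] [MeasurableSpace E] [BorelSpace E]

theorem setIntegral_norm_mem_Ioo_le (μ : Measure E) [μ.IsAddHaarMeasure] {g : ℝ → ℝ}
    {a b M : ℝ} (ha : 0 ≤ a) (hab : a ≤ b) (hg : ∀ y ∈ Ioo a b, 0 ≤ g y)
    (hM : ∀ y ∈ Ioo a b, y ^ (finrank ℝ E - 1) * g y ≤ M) :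
    ∫ x in {x : E | ‖x‖ ∈ Ioo a b}, g ‖x‖ ∂μ
      ≤ finrank ℝ E * μ.real (ball 0 1) * (M * (b - a)) := by
  have hS : MeasurableSet {x : E | ‖x‖ ∈ Ioo a b} := measurable_norm measurableSet_Ioo
  have hsub : Ioo a b ⊆ Ioi 0 := fun y hy => ha.trans_lt hy.1
  have hradial : ∫ y in Ioo a b, y ^ (finrank ℝ E - 1) * g y ≤ M * (b - a) := by
    refine le_trans (le_abs_self _) ?_
    rw [← Real.volume_real_Ioo_of_le hab, ← Real.norm_eq_abs]
    refine norm_setIntegral_le_of_norm_le_const measure_Ioo_lt_top fun y hy => ?_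
    rw [Real.norm_of_nonneg (mul_nonneg (pow_nonneg (hsub hy).le _) (hg y hy))]
    exact hM y hy
  calc ∫ x in {x : E | ‖x‖ ∈ Ioo a b}, g ‖x‖ ∂μ
      = ∫ x, (Ioo a b).indicator g ‖x‖ ∂μ := by
        rw [← integral_indicator hS]; rfl
    _ = finrank ℝ E * μ.real (ball 0 1) * ∫ y in Ioo a b, y ^ (finrank ℝ E - 1) * g y := by
        rw [integral_fun_norm_addHaar, nsmul_eq_mul, smul_eq_mul, mul_assoc]
        congr 2
        simp_rw [smul_eq_mul, ← indicator_mul_right _ (fun y => y ^ (finrank ℝ E - 1))]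
        rw [setIntegral_indicator measurableSet_Ioo, inter_eq_right.2 hsub]
    _ ≤ _ := by gcongr

end ShellIntegral

theorem L1L2_channel_eq_two_mul_integral (r₁ r₂ : ℝ) (v : EuclideanSpace ℝ (Fin 3) → ℝ) :
    L1L2 (channel r₁ r₂) (fun x _ => v x) =
      2 * ∫ T in Ioi (0 : ℝ), (∫ x in {x | ‖x‖ ∈ Ioo (T + r₁) (T + r₂)}, v x ^ 2) ^ ((1 : ℝ) / 2) :=
  integral_comp_abs
    (f := fun T => (∫ x in {x | ‖x‖ ∈ Ioo (T + r₁) (T + r₂)}, v x ^ 2) ^ ((1 : ℝ) / 2))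

theorem rpow_neg_div_two_sq {x : ℝ} (hx : 0 ≤ x) (a : ℝ) : (x ^ (-a / 2)) ^ 2 = x ^ (-a) := by
  rw [← rpow_natCast, ← rpow_mul hx]; norm_num

def groundProfile (r : ℝ) : ℝ := (1 / 3 + r ^ 2) ^ (-(1 : ℝ) / 2)

theorem W3_eq_groundProfile (x : EuclideanSpace ℝ (Fin 3)) : W3 x = groundProfile ‖x‖ := rfl

theorem Wlam_eq_groundProfile {lam : ℝ} (hl : 0 < lam) (x : EuclideanSpace ℝ (Fin 3)) :
    Wlam lam x = lam ^ (-(1 : ℝ) / 2) * groundProfile (‖x‖ / lam) := by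
  rw [Wlam, W3_eq_groundProfile, norm_smul, norm_inv, norm_of_nonneg hl.le, inv_mul_eq_div]

theorem groundProfile_nonneg (r : ℝ) : 0 ≤ groundProfile r := rpow_nonneg (by positivity) _

theorem groundProfile_sq (r : ℝ) : groundProfile r ^ 2 = (1 / 3 + r ^ 2)⁻¹ := by
  rw [groundProfile, rpow_neg_div_two_sq (by positivity), rpow_neg_one]

theorem sq_groundProfile_sub_sqrt_three_le_three (r : ℝ) : (groundProfile r - √3) ^ 2 ≤ 3 := by
  have hw := groundProfile_nonneg r
  have hw3 : groundProfile r ≤ √3 := by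
    rw [le_sqrt hw (by norm_num), groundProfile_sq]
    exact inv_le_of_inv_le₀ (by norm_num) (by nlinarith [sq_nonneg r])
  have h3 : √3 ^ 2 = 3 := sq_sqrt (by norm_num)
  nlinarith [mul_nonneg hw (sub_nonneg.2 hw3)]

theorem sq_groundProfile_sub_sqrt_three_le (r : ℝ) : (groundProfile r - √3) ^ 2 ≤ 27 * r ^ 4 := by
  set w := groundProfile r
  have h3 : √3 ^ 2 = 3 := sq_sqrt (by norm_num)
  have hdefect : 3 - w ^ 2 = 3 * r ^ 2 / (1 / 3 + r ^ 2) := by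
    rw [groundProfile_sq]; field_simp; ring
  have hdefect_le : 3 - w ^ 2 ≤ 9 * r ^ 2 := by
    rw [hdefect, div_le_iff₀ (by positivity)]; nlinarith [sq_nonneg r, sq_nonneg (r ^ 2)]
  have hdefect_nonneg : 0 ≤ 3 - w ^ 2 := by rw [hdefect]; positivity
  have hfactor : 3 * (w - √3) ^ 2 ≤ (3 - w ^ 2) ^ 2 := by
    have hsum : 3 ≤ (√3 + w) ^ 2 := by nlinarith [groundProfile_nonneg r, sqrt_nonneg 3]
    calc 3 * (w - √3) ^ 2 ≤ (√3 + w) ^ 2 * (w - √3) ^ 2 := by gcongr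
      _ = (√3 ^ 2 - w ^ 2) ^ 2 := by ring
      _ = (3 - w ^ 2) ^ 2 := by rw [h3]
  nlinarith

def perturbationSq (lam y : ℝ) : ℝ :=
  groundProfile y ^ 8 * lam⁻¹ * (groundProfile (y / lam) - √3) ^ 2

theorem perturbationSq_nonneg {lam : ℝ} (hl : 0 < lam) (y : ℝ) : 0 ≤ perturbationSq lam y := by
  unfold perturbationSq; positivity

theorem sq_W3_pow_four_mul_sub {lam : ℝ} (hl : 0 < lam) (x : EuclideanSpace ℝ (Fin 3)) :
    ((W3 x) ^ 4 * (Wlam lam x - √3 * lam ^ (-(1 : ℝ) / 2))) ^ 2 = perturbationSq lam ‖x‖ := by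
  have hinv : lam⁻¹ = (lam ^ (-(1 : ℝ) / 2)) ^ 2 := by
    rw [rpow_neg_div_two_sq hl.le, rpow_neg_one]
  rw [Wlam_eq_groundProfile hl, perturbationSq, W3_eq_groundProfile, hinv]
  ring

theorem groundProfile_pow_eight (y : ℝ) : groundProfile y ^ 8 = ((1 / 3 + y ^ 2) ^ 4)⁻¹ := by
  rw [show 8 = 2 * 4 by rfl, pow_mul, groundProfile_sq, inv_pow]

theorem sq_mul_perturbationSq_le_inv_one_add {lam T y : ℝ} (hl : 0 < lam) (hT : 0 ≤ T)
    (hy : T ≤ y) :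
    y ^ 2 * perturbationSq lam y ≤ (13 * lam ^ (-(5 : ℝ) / 2) * (1 + T)⁻¹) ^ 2 := by
  set P := 1 / 3 + y ^ 2
  have hP : 0 < P := by positivity
  have hpoly : 27 * y ^ 6 * (1 + T) ^ 2 ≤ 169 * P ^ 4 := by
    have h1 : (1 + T) ^ 2 ≤ 6 * P := by
      simp only [P]; nlinarith [sq_nonneg (y - 1), mul_le_mul hy hy hT (hT.trans hy)]
    have h2 : (y ^ 2) ^ 3 ≤ P ^ 3 := pow_le_pow_left₀ (sq_nonneg y) (by simp [P]) 3
    nlinarith [pow_nonneg hP.le 3, pow_nonneg (sq_nonneg y) 3]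
  calc y ^ 2 * perturbationSq lam y
      = y ^ 2 * (P ^ 4)⁻¹ * lam⁻¹ * (groundProfile (y / lam) - √3) ^ 2 := by
        rw [perturbationSq, groundProfile_pow_eight]; ring
    _ ≤ y ^ 2 * (P ^ 4)⁻¹ * lam⁻¹ * (27 * (y / lam) ^ 4) := by
        gcongr; exact sq_groundProfile_sub_sqrt_three_le _
    _ = 27 * y ^ 6 * (1 + T) ^ 2 / P ^ 4 * ((lam ^ 5)⁻¹ * ((1 + T) ^ 2)⁻¹) := by
        field_simp
    _ ≤ 169 * ((lam ^ 5)⁻¹ * ((1 + T) ^ 2)⁻¹) := by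
        gcongr; rwa [div_le_iff₀ (by positivity)]
    _ = (13 * lam ^ (-(5 : ℝ) / 2) * (1 + T)⁻¹) ^ 2 := by
        rw [mul_pow, mul_pow, rpow_neg_div_two_sq hl.le, rpow_neg hl.le, rpow_ofNat, inv_pow]
        ring

theorem sq_mul_perturbationSq_le_rpow_neg_three {lam T y : ℝ} (hl : 0 < lam) (hT : 0 < T)
    (hy : T ≤ y) :
    y ^ 2 * perturbationSq lam y ≤ (2 * lam ^ (-(1 : ℝ) / 2) * T ^ (-3 : ℝ)) ^ 2 := by
  set P := 1 / 3 + y ^ 2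
  have hP : 0 < P := by positivity
  have hpoly : 3 * y ^ 2 * T ^ 6 ≤ 4 * P ^ 4 := by
    have h1 : T ^ 6 ≤ y ^ 6 := pow_le_pow_left₀ hT.le hy 6
    have h2 : (y ^ 2) ^ 4 ≤ P ^ 4 := pow_le_pow_left₀ (sq_nonneg y) (by simp [P]) 4
    nlinarith [pow_nonneg hP.le 4, sq_nonneg y]
  calc y ^ 2 * perturbationSq lam y
      = y ^ 2 * (P ^ 4)⁻¹ * lam⁻¹ * (groundProfile (y / lam) - √3) ^ 2 := by
        rw [perturbationSq, groundProfile_pow_eight]; ring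
    _ ≤ y ^ 2 * (P ^ 4)⁻¹ * lam⁻¹ * 3 := by
        gcongr; exact sq_groundProfile_sub_sqrt_three_le_three _
    _ = 3 * y ^ 2 * T ^ 6 / P ^ 4 * (lam⁻¹ * (T ^ 6)⁻¹) := by
        field_simp
    _ ≤ 4 * (lam⁻¹ * (T ^ 6)⁻¹) := by
        gcongr; rwa [div_le_iff₀ (by positivity)]
    _ = (2 * lam ^ (-(1 : ℝ) / 2) * T ^ (-3 : ℝ)) ^ 2 := by
        rw [mul_pow, mul_pow, rpow_neg_div_two_sq hl.le, rpow_neg_one, rpow_neg hT.le, rpow_ofNat]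
        ring

def shellBound (lam T : ℝ) : ℝ :=
  if T ≤ lam then 13 * lam ^ (-(5 : ℝ) / 2) * (1 + T)⁻¹
  else 2 * lam ^ (-(1 : ℝ) / 2) * T ^ (-3 : ℝ)

theorem shellBound_of_le {lam T : ℝ} (h : T ≤ lam) :
    shellBound lam T = 13 * lam ^ (-(5 : ℝ) / 2) * (1 + T)⁻¹ :=
  if_pos h

theorem shellBound_of_lt {lam T : ℝ} (h : lam < T) :
    shellBound lam T = 2 * lam ^ (-(1 : ℝ) / 2) * T ^ (-3 : ℝ) :=
  if_neg (not_le.2 h)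

theorem shellBound_nonneg {lam T : ℝ} (hl : 0 < lam) (hT : 0 ≤ T) : 0 ≤ shellBound lam T := by
  unfold shellBound; split_ifs <;> positivity

theorem sq_mul_perturbationSq_le_shellBound_sq {lam T y : ℝ} (hl : 0 < lam) (hT : 0 ≤ T)
    (hy : T ≤ y) : y ^ 2 * perturbationSq lam y ≤ shellBound lam T ^ 2 := by
  rcases le_or_gt T lam with hTl | hTl
  · rw [shellBound_of_le hTl]; exact sq_mul_perturbationSq_le_inv_one_add hl hT hy
  · rw [shellBound_of_lt hTl]; exact sq_mul_perturbationSq_le_rpow_neg_three hl (hl.trans hTl) hy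

theorem setIntegral_shell_le {lam r₁ r₂ T : ℝ} (hl : 0 < lam) (hr₁ : 0 ≤ r₁) (h12 : r₁ ≤ r₂)
    (hT : 0 ≤ T) :
    ∫ x in {x : EuclideanSpace ℝ (Fin 3) | ‖x‖ ∈ Ioo (T + r₁) (T + r₂)},
        ((W3 x) ^ 4 * (Wlam lam x - √3 * lam ^ (-(1 : ℝ) / 2))) ^ 2
      ≤ 4 * π * (r₂ - r₁) * shellBound lam T ^ 2 := by
  simp_rw [sq_W3_pow_four_mul_sub hl]
  refine (setIntegral_norm_mem_Ioo_le volume (M := shellBound lam T ^ 2) (by positivity)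
    (by linarith) (fun y _ => perturbationSq_nonneg hl y) fun y hy => ?_).trans_eq ?_
  · rw [finrank_euclideanSpace_fin]
    exact sq_mul_perturbationSq_le_shellBound_sq hl hT (by linarith [hy.1])
  · rw [finrank_euclideanSpace_fin, Measure.real, EuclideanSpace.volume_ball_fin_three,
      ENNReal.ofReal_one, one_pow, one_mul, ENNReal.toReal_ofReal (by positivity)]
    ring

theorem integrableOn_shellBound {lam : ℝ} (hl : 0 < lam) :
    IntegrableOn (shellBound lam) (Ioi 0) := by
  rw [← Ioc_union_Ioi_eq_Ioi hl.le]
  refine IntegrableOn.union ?_ ?_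
  · refine IntegrableOn.congr_fun ?_ (fun T hT => (shellBound_of_le hT.2).symm) measurableSet_Ioc
    refine (ContinuousOn.integrableOn_Icc ?_).mono_set Ioc_subset_Icc_self
    exact continuousOn_const.mul ((continuousOn_const.add continuousOn_id).inv₀
      fun T hT => (show (0 : ℝ) < 1 + T by linarith [hT.1]).ne')
  · refine IntegrableOn.congr_fun ?_ (fun T hT => (shellBound_of_lt hT).symm) measurableSet_Ioi
    exact (integrableOn_Ioi_rpow_of_lt (by norm_num) hl).const_mul _

theorem integral_shellBound {lam : ℝ} (hl : 0 < lam) :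
    ∫ T in Ioi 0, shellBound lam T = lam ^ (-(5 : ℝ) / 2) * (13 * log (1 + lam) + 1) := by
  have hint := integrableOn_shellBound hl
  rw [← Ioc_union_Ioi_eq_Ioi hl.le] at hint ⊢
  rw [setIntegral_union Ioc_disjoint_Ioi_same measurableSet_Ioi
    (hint.mono_set subset_union_left) (hint.mono_set subset_union_right),
    setIntegral_congr_fun measurableSet_Ioc (fun T hT => shellBound_of_le hT.2),
    setIntegral_congr_fun measurableSet_Ioi (fun T hT => shellBound_of_lt hT),
    ← intervalIntegral.integral_of_le hl.le, intervalIntegral.integral_const_mul,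
    intervalIntegral.integral_comp_add_left (fun T => T⁻¹),
    integral_inv_of_pos (by norm_num) (by linarith), integral_const_mul,
    integral_Ioi_rpow_of_lt (by norm_num) hl]
  have hpow : lam ^ (-(1 : ℝ) / 2) * lam ^ ((-3 : ℝ) + 1) = lam ^ (-(5 : ℝ) / 2) := by
    rw [← rpow_add hl]; norm_num
  rw [add_zero, div_one, ← hpow]
  ring

theorem integral_sqrt_setIntegral_shell_le {lam r₁ r₂ : ℝ} (hl : 0 < lam) (hr₁ : 0 ≤ r₁)
    (h12 : r₁ ≤ r₂) :
    ∫ T in Ioi 0, (∫ x in {x : EuclideanSpace ℝ (Fin 3) | ‖x‖ ∈ Ioo (T + r₁) (T + r₂)},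
        ((W3 x) ^ 4 * (Wlam lam x - √3 * lam ^ (-(1 : ℝ) / 2))) ^ 2) ^ ((1 : ℝ) / 2)
      ≤ √(4 * π * (r₂ - r₁)) * (lam ^ (-(5 : ℝ) / 2) * (13 * log (1 + lam) + 1)) := by
  rw [← integral_shellBound hl, ← integral_const_mul]
  refine integral_mono_of_nonneg (ae_of_all _ fun T => by positivity)
    ((integrableOn_shellBound hl).const_mul _) (ae_restrict_of_forall_mem measurableSet_Ioi ?_)
  intro T hT
  dsimp only
  rw [← sqrt_eq_rpow, ← sqrt_sq (shellBound_nonneg hl (le_of_lt hT)),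
    ← sqrt_mul (by nlinarith [pi_pos])]
  exact sqrt_le_sqrt (setIntegral_shell_le hl hr₁ h12 (le_of_lt hT))

theorem log_one_add_le_two_mul_log {x : ℝ} (hx : 2 ≤ x) : log (1 + x) ≤ 2 * log x := by
  rw [← log_rpow (by linarith)]
  exact log_le_log (by linarith) (by norm_num; nlinarith)

theorem stmt6 :
    ∃ C : ℝ, 0 < C ∧ ∀ lam r₁ r₂ : ℝ, 2 ≤ lam → 0 ≤ r₁ → r₁ < r₂ → r₂ ≤ lam →
      L1L2 (channel r₁ r₂)
          (fun x _ => (W3 x)^4 * (Wlam lam x - Real.sqrt 3 * lam ^ (-(1:ℝ)/2)))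
        ≤ C * (r₂ - r₁) ^ ((1:ℝ)/2) * lam ^ (-(5:ℝ)/2) * Real.log lam := by
  refine ⟨112 * √π, by positivity, fun lam r₁ r₂ hlam hr₁ h12 _ => ?_⟩
  have hl : 0 < lam := by linarith
  have hlog : 13 * log (1 + lam) + 1 ≤ 28 * log lam := by
    linarith [log_one_add_le_two_mul_log hlam, log_two_gt_d9, log_le_log two_pos hlam]
  have hκ : √(4 * π * (r₂ - r₁)) = 2 * √π * (r₂ - r₁) ^ ((1 : ℝ) / 2) := by
    rw [sqrt_mul (by positivity), sqrt_mul (by norm_num), sqrt_eq_rpow (r₂ - r₁),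
      show (4 : ℝ) = 2 ^ 2 by norm_num, sqrt_sq two_pos.le]
  rw [L1L2_channel_eq_two_mul_integral]
  calc _ ≤ 2 * (√(4 * π * (r₂ - r₁)) * (lam ^ (-(5 : ℝ) / 2) * (13 * log (1 + lam) + 1))) :=
        mul_le_mul_of_nonneg_left (integral_sqrt_setIntegral_shell_le hl hr₁ h12.le) two_pos.le
    _ ≤ 2 * (√(4 * π * (r₂ - r₁)) * (lam ^ (-(5 : ℝ) / 2) * (28 * log lam))) := by gcongr
    _ = 112 * √π * (r₂ - r₁) ^ ((1 : ℝ) / 2) * lam ^ (-(5 : ℝ) / 2) * log lam := by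
        rw [hκ]; ring
end
end

section
/- There is an absolute constant C > 0 such that for every G ∈ L²(ℝ), every R > 0 with G(s) = 0 for almost every |s| < R, and all real numbers 0 ≤ r₁ < r₂ ≤ R, the associated radial free wave v satisfies ‖χ_{Ω_{r₁,r₂}} v‖_Y ≤ C · ((r₂ − r₁)/R)^(1/10) · ‖G‖_{L²(ℝ)}. -/
open MeasureTheory Real Set

noncomputable section

/-!
By Cauchy–Schwarz, `|v(x,t)|² ≤ 2‖G‖²/|x|`, and `v(x,t) = 0` when `|x| + |t| < R` since `G`
vanishes on `(-R, R)`. In the channel `|x| > |t|`, so wherever `v ≠ 0` we have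
`3|x| ≥ R + |t|` and hence `|v|¹⁰ ≤ (6‖G‖²/(R + |t|))⁵`. The time-`t` slice of `Ω_{r₁,r₂}` is a
shell of volume `≲ (r₂ - r₁)(R + |t|)²`, so the `L¹⁰` integral over it is
`≲ (r₂ - r₁)‖G‖¹⁰(R + |t|)⁻³`. Its square root is integrable in `t`, with
`∫ (R + |t|)^(-3/2) dt = 4R^(-1/2)`, and the fifth root of the result is the claimed bound.
-/

open Metric Module

local notation "ℝ³" => EuclideanSpace ℝ (Fin 3)

theorem MeasureTheory.Measure.addHaar_real_shell_le {E : Type*} [NormedAddCommGroup E]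
    [NormedSpace ℝ E] [MeasurableSpace E] [BorelSpace E] [FiniteDimensional ℝ E] (μ : Measure E)
    [μ.IsAddHaarMeasure] {a b : ℝ} (ha : 0 ≤ a) (hab : a ≤ b) :
    μ.real {x | a < ‖x‖ ∧ ‖x‖ < b} ≤ (b ^ finrank ℝ E - a ^ finrank ℝ E) * μ.real (ball 0 1) := by
  have hshell : {x : E | a < ‖x‖ ∧ ‖x‖ < b} ⊆ closedBall 0 b \ closedBall 0 a :=
    fun x hx ↦
      ⟨mem_closedBall_zero_iff.2 hx.2.le, fun h ↦ (mem_closedBall_zero_iff.1 h).not_gt hx.1⟩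
  calc μ.real {x | a < ‖x‖ ∧ ‖x‖ < b}
      ≤ μ.real (closedBall 0 b \ closedBall 0 a) :=
        measureReal_mono hshell (measure_closedBall_lt_top.trans_le' (measure_mono sdiff_subset)).ne
    _ = (b ^ finrank ℝ E - a ^ finrank ℝ E) * μ.real (ball 0 1) := by
        rw [measureReal_sdiff (closedBall_subset_closedBall hab) measurableSet_closedBall
          measure_closedBall_lt_top.ne, μ.addHaar_real_closedBall 0 (ha.trans hab),
          μ.addHaar_real_closedBall 0 ha, sub_mul]

theorem MeasureTheory.sq_setIntegral_le_measureReal_mul {α : Type*} [MeasurableSpace α]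
    {μ : Measure α} {s : Set α} {f : α → ℝ} (hs : μ s ≠ ⊤) (hf : MemLp f 2 (μ.restrict s)) :
    (∫ x in s, f x ∂μ) ^ 2 ≤ μ.real s * ∫ x in s, f x ^ 2 ∂μ := by
  have : IsFiniteMeasure (μ.restrict s) := isFiniteMeasure_restrict.2 hs
  have holder := integral_mul_norm_le_Lp_mul_Lq (μ := μ.restrict s) Real.HolderConjugate.two_two
    (by simpa using hf) (by simpa using memLp_const (1 : ℝ))
  simp only [norm_one, mul_one, Real.norm_eq_abs, rpow_two, sq_abs, setIntegral_const,
    smul_eq_mul, one_pow, ← sqrt_eq_rpow] at holder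
  calc (∫ x in s, f x ∂μ) ^ 2 = |∫ x in s, f x ∂μ| ^ 2 := (sq_abs _).symm
    _ ≤ (√(∫ x in s, f x ^ 2 ∂μ) * √(μ.real s)) ^ 2 :=
        pow_le_pow_left₀ (abs_nonneg _) (abs_integral_le_integral_abs.trans holder) 2
    _ = μ.real s * ∫ x in s, f x ^ 2 ∂μ := by
        rw [mul_pow, sq_sqrt (integral_nonneg fun x ↦ sq_nonneg (f x)), sq_sqrt measureReal_nonneg,
          mul_comm]

theorem sq_intervalIntegral_le_mul_integral_sq {G : ℝ → ℝ} (hG : MemLp G 2) {a b : ℝ}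
    (hab : a ≤ b) : (∫ s in a..b, G s) ^ 2 ≤ (b - a) * ∫ s, G s ^ 2 := by
  rw [intervalIntegral.integral_of_le hab]
  calc (∫ s in Ioc a b, G s) ^ 2 ≤ volume.real (Ioc a b) * ∫ s in Ioc a b, G s ^ 2 :=
        sq_setIntegral_le_measureReal_mul measure_Ioc_lt_top.ne (hG.restrict _)
    _ ≤ (b - a) * ∫ s, G s ^ 2 := by
        rw [volume_real_Ioc_of_le hab]
        exact mul_le_mul_of_nonneg_left (setIntegral_le_integral hG.integrable_sq
          (ae_of_all _ fun s ↦ sq_nonneg (G s))) (sub_nonneg.2 hab)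

theorem integral_add_abs_rpow {a R : ℝ} (ha : a < -1) (hR : 0 < R) :
    ∫ t : ℝ, (R + |t|) ^ a = -2 * R ^ (a + 1) / (a + 1) := by
  have hshift : ∫ t in Ioi (0 : ℝ), (t + R) ^ a = ∫ u in Ioi R, u ^ a := by
    have := (measurePreserving_add_right volume R).setIntegral_preimage_emb
      (measurableEmbedding_addRight R) (fun u : ℝ ↦ u ^ a) (Ioi R)
    rwa [preimage_add_const_Ioi, sub_self] at this
  rw [integral_comp_abs (f := fun u ↦ (R + u) ^ a)]
  simp_rw [add_comm R, hshift, integral_Ioi_rpow_of_lt ha hR]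
  ring

theorem integrable_add_abs_rpow {a R : ℝ} (ha : a < -1) (hR : 0 < R) :
    Integrable fun t : ℝ ↦ (R + |t|) ^ a := by
  -- a non-integrable function has integral `0`, but this integral is positive
  by_contra h
  have hint := integral_add_abs_rpow ha hR
  rw [integral_undef h] at hint
  have : 0 < -2 * R ^ (a + 1) / (a + 1) :=
    div_pos_of_neg_of_neg (by nlinarith [rpow_pos_of_pos hR (a + 1)]) (by linarith)
  linarith

theorem Real.rpow_inv_natCast_le_of_le_mul_pow {T K X : ℝ} {n : ℕ} (hn : n ≠ 0) (hT : 0 ≤ T)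
    (hK : 0 ≤ K) (hX : 0 ≤ X) (h : T ≤ K * X ^ n) : T ^ (n⁻¹ : ℝ) ≤ K ^ (n⁻¹ : ℝ) * X := by
  calc T ^ (n⁻¹ : ℝ) ≤ (K * X ^ n) ^ (n⁻¹ : ℝ) := rpow_le_rpow hT h (by positivity)
    _ = K ^ (n⁻¹ : ℝ) * X := by rw [mul_rpow hK (pow_nonneg hX n), pow_rpow_inv_natCast hX hn]

section freeWave

variable {G : ℝ → ℝ} {R r₁ r₂ : ℝ}

theorem freeWave_sq_le (hG : MemLp G 2) (x : ℝ³) (t : ℝ) :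
    freeWave G x t ^ 2 ≤ 2 * (∫ s, G s ^ 2) / ‖x‖ := by
  have hCS := sq_intervalIntegral_le_mul_integral_sq hG
    (by linarith [norm_nonneg x] : t - ‖x‖ ≤ t + ‖x‖)
  rcases (norm_nonneg x).eq_or_lt with hx | hx
  · simp [freeWave, ← hx]
  calc freeWave G x t ^ 2 = (∫ s in (t - ‖x‖)..(t + ‖x‖), G s) ^ 2 / ‖x‖ ^ 2 := by
        rw [freeWave, mul_pow, inv_pow, inv_mul_eq_div]
    _ ≤ (t + ‖x‖ - (t - ‖x‖)) * (∫ s, G s ^ 2) / ‖x‖ ^ 2 := by gcongr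
    _ = 2 * (∫ s, G s ^ 2) / ‖x‖ := by field_simp; ring

theorem freeWave_eq_zero_of_norm_add_abs_lt (hvan : ∀ᵐ s : ℝ, |s| < R → G s = 0) {x : ℝ³}
    {t : ℝ} (h : ‖x‖ + |t| < R) : freeWave G x t = 0 := by
  have hzero : ∫ s in (t - ‖x‖)..(t + ‖x‖), G s = 0 := by
    rw [intervalIntegral.integral_of_le (by linarith [norm_nonneg x])]
    refine setIntegral_eq_zero_of_ae_eq_zero ?_
    filter_upwards [hvan] with s hs hmem
    exact hs (abs_lt.2 ⟨by linarith [neg_abs_le t, hmem.1], by linarith [le_abs_self t, hmem.2]⟩)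
  rw [freeWave, hzero, mul_zero]

theorem freeWave_sq_le_of_mem_channel (hG : MemLp G 2) (hR : 0 < R)
    (hvan : ∀ᵐ s : ℝ, |s| < R → G s = 0) (hr₁ : 0 ≤ r₁) {x : ℝ³} {t : ℝ}
    (hx : (x, t) ∈ channel r₁ r₂) : freeWave G x t ^ 2 ≤ 6 * (∫ s, G s ^ 2) / (R + |t|) := by
  have hI : 0 ≤ ∫ s, G s ^ 2 := integral_nonneg fun s ↦ sq_nonneg (G s)
  by_cases hcone : ‖x‖ + |t| < R
  · rw [freeWave_eq_zero_of_norm_add_abs_lt hvan hcone, zero_pow two_ne_zero]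
    positivity
  have hx3 : R + |t| ≤ 3 * ‖x‖ := by linarith [hx.1]
  calc freeWave G x t ^ 2 ≤ 2 * (∫ s, G s ^ 2) / ‖x‖ := freeWave_sq_le hG x t
    _ = 6 * (∫ s, G s ^ 2) / (3 * ‖x‖) := by field_simp; ring
    _ ≤ 6 * (∫ s, G s ^ 2) / (R + |t|) := by gcongr

theorem volume_real_channel_slice_le (hr₁ : 0 ≤ r₁) (hr₁₂ : r₁ ≤ r₂) (t : ℝ) :
    volume.real {x : ℝ³ | (x, t) ∈ channel r₁ r₂}
      ≤ 3 * (r₂ - r₁) * (|t| + r₂) ^ 2 * volume.real (ball (0 : ℝ³) 1) := by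
  have hshell := (volume : Measure ℝ³).addHaar_real_shell_le
    (by positivity : 0 ≤ |t| + r₁) (by linarith : |t| + r₁ ≤ |t| + r₂)
  rw [finrank_euclideanSpace_fin] at hshell
  refine hshell.trans (mul_le_mul_of_nonneg_right ?_ measureReal_nonneg)
  nlinarith [abs_nonneg t, mul_nonneg (mul_nonneg (sub_nonneg.2 hr₁₂) (sub_nonneg.2 hr₁₂))
    (by linarith [abs_nonneg t] : 0 ≤ 2 * (|t| + r₂) + (|t| + r₁))]

theorem integral_channel_slice_le (hG : MemLp G 2) (hR : 0 < R)
    (hvan : ∀ᵐ s : ℝ, |s| < R → G s = 0) (hr₁ : 0 ≤ r₁) (hr₁₂ : r₁ ≤ r₂) (hr₂ : r₂ ≤ R) (t : ℝ) :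
    ∫ x in {x | (x, t) ∈ channel r₁ r₂}, |freeWave G x t| ^ 10
      ≤ 3 * volume.real (ball (0 : ℝ³) 1) * (r₂ - r₁) * (6 * ∫ s, G s ^ 2) ^ 5 / (R + |t|) ^ 3 := by
  set I := ∫ s, G s ^ 2
  have hP : 0 < R + |t| := by positivity
  have hbound : ∀ x ∈ {x | (x, t) ∈ channel r₁ r₂},
      ‖|freeWave G x t| ^ 10‖ ≤ (6 * I / (R + |t|)) ^ 5 := by
    intro x hx
    rw [norm_pow, norm_abs_eq_norm, norm_eq_abs, show 10 = 2 * 5 from rfl, pow_mul, sq_abs]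
    exact pow_le_pow_left₀ (sq_nonneg _) (freeWave_sq_le_of_mem_channel hG hR hvan hr₁ hx) 5
  have hfin : volume {x : ℝ³ | (x, t) ∈ channel r₁ r₂} < ⊤ :=
    measure_ball_lt_top.trans_le' (measure_mono (t := ball 0 (|t| + r₂))
      fun x (hx : _ ∧ ‖x‖ < _) ↦ mem_ball_zero_iff.2 hx.2)
  calc ∫ x in {x | (x, t) ∈ channel r₁ r₂}, |freeWave G x t| ^ 10
      ≤ (6 * I / (R + |t|)) ^ 5 * volume.real {x : ℝ³ | (x, t) ∈ channel r₁ r₂} :=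
        (le_abs_self _).trans (norm_setIntegral_le_of_norm_le_const hfin hbound)
    _ ≤ (6 * I / (R + |t|)) ^ 5
          * (3 * (r₂ - r₁) * (R + |t|) ^ 2 * volume.real (ball (0 : ℝ³) 1)) := by
        have hb : (|t| + r₂) ^ 2 ≤ (R + |t|) ^ 2 :=
          pow_le_pow_left₀ (by linarith [abs_nonneg t]) (by linarith) 2
        gcongr
        exact (volume_real_channel_slice_le hr₁ hr₁₂ t).trans (by gcongr 3 * (r₂ - r₁) * ?_ * _)
    _ = _ := by field_simp

theorem rpow_half_integral_channel_slice_le (hG : MemLp G 2) (hR : 0 < R)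
    (hvan : ∀ᵐ s : ℝ, |s| < R → G s = 0) (hr₁ : 0 ≤ r₁) (hr₁₂ : r₁ ≤ r₂) (hr₂ : r₂ ≤ R) (t : ℝ) :
    (∫ x in {x | (x, t) ∈ channel r₁ r₂}, |freeWave G x t| ^ 10) ^ ((1 : ℝ) / 2)
      ≤ √(3 * volume.real (ball (0 : ℝ³) 1) * (r₂ - r₁) * (6 * ∫ s, G s ^ 2) ^ 5)
          * (R + |t|) ^ (-(3 / 2 : ℝ)) := by
  have hP : 0 < R + |t| := by positivity
  rw [← sqrt_eq_rpow]
  calc _ ≤ √(3 * volume.real (ball (0 : ℝ³) 1) * (r₂ - r₁) * (6 * ∫ s, G s ^ 2) ^ 5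
          / (R + |t|) ^ 3) :=
        sqrt_le_sqrt (integral_channel_slice_le hG hR hvan hr₁ hr₁₂ hr₂ t)
    _ = _ := by
        rw [sqrt_div' _ (by positivity), div_eq_mul_inv, sqrt_eq_rpow ((R + |t|) ^ 3),
          ← rpow_natCast (R + |t|), ← rpow_mul hP.le, ← rpow_neg hP.le]
        norm_num

theorem integral_rpow_half_integral_channel_slice_le (hG : MemLp G 2) (hR : 0 < R)
    (hvan : ∀ᵐ s : ℝ, |s| < R → G s = 0) (hr₁ : 0 ≤ r₁) (hr₁₂ : r₁ ≤ r₂) (hr₂ : r₂ ≤ R) :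
    ∫ t, (∫ x in {x | (x, t) ∈ channel r₁ r₂}, |freeWave G x t| ^ 10) ^ ((1 : ℝ) / 2)
      ≤ 4 * √(3 * volume.real (ball (0 : ℝ³) 1) * 6 ^ 5)
          * (((r₂ - r₁) / R) ^ ((1 : ℝ) / 10) * (∫ s, G s ^ 2) ^ ((1 : ℝ) / 2)) ^ 5 := by
  set ω := volume.real (ball (0 : ℝ³) 1)
  set I := ∫ s, G s ^ 2
  have hI : 0 ≤ I := integral_nonneg fun s ↦ sq_nonneg (G s)
  have hr : 0 ≤ r₂ - r₁ := by linarith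
  have hroot : (((r₂ - r₁) / R) ^ ((1 : ℝ) / 10)) ^ 5 = √(r₂ - r₁) / √R := by
    rw [← rpow_natCast, ← rpow_mul (by positivity), ← sqrt_div' _ hR.le, sqrt_eq_rpow]
    norm_num
  have hI5 : √(I ^ 5) = √I ^ 5 := by
    conv_lhs => rw [← sq_sqrt hI, ← pow_mul, mul_comm, pow_mul]
    exact sqrt_sq (by positivity)
  calc _ ≤ ∫ t, √(3 * ω * (r₂ - r₁) * (6 * I) ^ 5) * (R + |t|) ^ (-(3 / 2 : ℝ)) :=
        integral_mono_of_nonneg (ae_of_all _ fun t ↦ by positivity)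
          ((integrable_add_abs_rpow (by norm_num) hR).const_mul _)
          (ae_of_all _ (rpow_half_integral_channel_slice_le hG hR hvan hr₁ hr₁₂ hr₂))
    _ = √(3 * ω * 6 ^ 5 * (r₂ - r₁) * I ^ 5) * (4 * R ^ (-(1 / 2 : ℝ))) := by
        rw [integral_const_mul, integral_add_abs_rpow (by norm_num) hR]
        ring_nf
    _ = _ := by
        rw [mul_pow (((r₂ - r₁) / R) ^ ((1 : ℝ) / 10)), hroot, ← sqrt_eq_rpow, rpow_neg hR.le,
          ← sqrt_eq_rpow, sqrt_mul' _ (pow_nonneg hI 5), sqrt_mul' _ hr, hI5]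
        field_simp

end freeWave

theorem stmt7 :
    ∃ C : ℝ, 0 < C ∧ ∀ (G : ℝ → ℝ) (R r₁ r₂ : ℝ),
      MemLp G 2 (volume : Measure ℝ) → 0 < R →
      (∀ᵐ s : ℝ, |s| < R → G s = 0) →
      0 ≤ r₁ → r₁ < r₂ → r₂ ≤ R →
      Ynorm (channel r₁ r₂) (freeWave G)
        ≤ C * ((r₂ - r₁) / R) ^ ((1:ℝ)/10) * (∫ s : ℝ, (G s)^2) ^ ((1:ℝ)/2) := by
  have hω : 0 < volume.real (ball (0 : ℝ³) 1) :=
    ENNReal.toReal_pos (measure_ball_pos _ _ one_pos).ne' measure_ball_lt_top.ne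
  refine ⟨(4 * √(3 * volume.real (ball (0 : ℝ³) 1) * 6 ^ 5)) ^ ((1 : ℝ) / 5), by positivity, ?_⟩
  intro G R r₁ r₂ hG hR hvan hr₁ hr₁₂ hr₂
  have := Real.rpow_inv_natCast_le_of_le_mul_pow (n := 5) (by norm_num)
    (integral_nonneg fun t ↦ by positivity) (by positivity) (by positivity)
    (integral_rpow_half_integral_channel_slice_le hG hR hvan hr₁ hr₁₂.le hr₂)
  rw [Ynorm, mul_assoc]
  simpa only [one_div, Nat.cast_ofNat] using this
end
end
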